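/- arXiv:2311.16598 — 4 statements merged into one kernel-verified Lean document; each statement's English description precedes it below -/
import Mathlib

section
/- If X is a random vector in ℝ^d whose law is absolutely continuous with respect to Lebesgue measure on ℝ^d, then the rectilinear median bias of X is at most the orthant median bias of X: max(0, 1/2 − min{P(η X_j ≥ 0) : 1 ≤ j ≤ d, η ∈ {−1,1}}) ≤ 2^{d−1}·max(0, 2^{−d} − min_{A ∈ O^d} P(X ∈ A)). -/
open MeasureTheory

/-- The closed orthant of `ℝ^d` determined by a sign pattern `s : Fin d → Bool`
(`true` means the coordinate lies in `[0, ∞)`, `false` means it lies in `(-∞, 0]`). -/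
def orthant {d : ℕ} (s : Fin d → Bool) : Set (Fin d → ℝ) :=
  {x | ∀ j, if s j then 0 ≤ x j else x j ≤ 0}

/-- Counting sign patterns with a fixed value at one coordinate. -/
lemma card_fixed_sign {m : ℕ} (j : Fin (m + 1)) (b : Bool) :
    Fintype.card {s : Fin (m + 1) → Bool // s j = b} = 2 ^ m := by
  classical
  have e : {s : Fin (m + 1) → Bool // s j = b} ≃ ({k : Fin (m + 1) // k ≠ j} → Bool) :=
    { toFun := fun s k => s.1 k.1
      invFun := fun f => ⟨fun k => if h : k = j then b else f ⟨k, h⟩, by simp⟩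
      left_inv := by
        rintro ⟨s, hs⟩
        ext k
        by_cases h : k = j
        · subst h; simp [hs]
        · simp [h]
      right_inv := by
        intro f
        ext k
        simp [k.2] }
  rw [Fintype.card_congr e, Fintype.card_fun, Fintype.card_bool]
  congr 1
  have h1 : Fintype.card {k : Fin (m + 1) // k = j} = 1 := Fintype.card_subtype_eq j
  have := Fintype.card_subtype_compl (fun k : Fin (m + 1) => k = j)
  simp only [h1, Fintype.card_fin] at this
  simp_all

/-- If `X` is a random vector in `ℝ^d` whose law is absolutely continuous
with respect to Lebesgue measure, then the rectilinear median bias of `X` is at most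
the orthant median bias of `X`. -/
theorem rectilinear_le_orthant_median_bias
    {Ω : Type*} [MeasurableSpace Ω] (P : Measure Ω) [IsProbabilityMeasure P]
    {d : ℕ} (hd : 1 ≤ d) (X : Ω → Fin d → ℝ) (hX : Measurable X)
    (hac : Measure.map X P ≪ (volume : Measure (Fin d → ℝ))) :
    max 0 (1 / 2 -
        ⨅ (j : Fin d) (η : ({-1, 1} : Set ℝ)), (P {ω | (η : ℝ) * X ω j ≥ 0}).toReal)
      ≤ 2 ^ (d - 1) *
        max 0 (1 / 2 ^ d - ⨅ s : Fin d → Bool, (P {ω | X ω ∈ orthant s}).toReal) := by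
  classical
  obtain ⟨m, rfl⟩ : ∃ m, d = m + 1 := ⟨d - 1, (Nat.succ_pred_eq_of_pos hd).symm⟩
  simp only [Nat.add_sub_cancel]
  set μ := Measure.map X P with hμdef
  haveI hμprob : IsProbabilityMeasure μ := Measure.isProbabilityMeasure_map hX.aemeasurable
  -- measurability of orthants
  have hmo : ∀ s : Fin (m + 1) → Bool, MeasurableSet (orthant s) := by
    intro s
    have h : orthant s = ⋂ j, {x : Fin (m + 1) → ℝ | if s j then 0 ≤ x j else x j ≤ 0} := by
      ext x; simp [orthant, Set.mem_iInter]
    rw [h]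
    refine MeasurableSet.iInter fun j => ?_
    by_cases hb : s j
    · simp only [hb, if_true]
      exact measurableSet_le measurable_const (measurable_pi_apply j)
    · simp only [hb, if_false]
      exact measurableSet_le (measurable_pi_apply j) measurable_const
  have hPq : ∀ s : Fin (m + 1) → Bool, P {ω | X ω ∈ orthant s} = μ (orthant s) :=
    fun s => (Measure.map_apply hX (hmo s)).symm
  -- a.e. disjointness of distinct orthants
  have hdisj : ∀ s t : Fin (m + 1) → Bool, s ≠ t → μ (orthant s ∩ orthant t) = 0 := by
    intro s t hst
    obtain ⟨k, hk⟩ := Function.ne_iff.mp hst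
    have hsub : orthant s ∩ orthant t ⊆ {x : Fin (m + 1) → ℝ | x k = 0} := by
      rintro x ⟨hs, ht⟩
      have h1 := hs k
      have h2 := ht k
      cases hb : s k <;> cases hb' : t k <;> rw [hb] at h1 hk <;> rw [hb'] at h2 hk <;>
        simp_all <;> linarith
    refine measure_mono_null hsub (hac ?_)
    have : (volume : Measure (Fin (m + 1) → ℝ)) = Measure.pi fun _ => volume := rfl
    rw [this]
    exact Measure.pi_hyperplane _ k 0
  have hbdd : BddBelow (Set.range fun s : Fin (m + 1) → Bool =>
      (P {ω | X ω ∈ orthant s}).toReal) := by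
    refine ⟨0, ?_⟩
    rintro x ⟨s, rfl⟩
    exact ENNReal.toReal_nonneg
  set q : ℝ := ⨅ s : Fin (m + 1) → Bool, (P {ω | X ω ∈ orthant s}).toReal with hq
  -- main estimate: each half-space event has probability at least 2^m * q
  have main : ∀ (j : Fin (m + 1)) (b : Bool) (E : Set (Fin (m + 1) → ℝ)),
      MeasurableSet E → (∀ s : Fin (m + 1) → Bool, s j = b → orthant s ⊆ E) →
      2 ^ m * q ≤ (P (X ⁻¹' E)).toReal := by
    intro j b E hE hsubE
    set S : Finset (Fin (m + 1) → Bool) := Finset.univ.filter (fun s => s j = b) with hSdef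
    have hcard : S.card = 2 ^ m := by
      rw [hSdef, ← Fintype.card_subtype]
      exact card_fixed_sign j b
    have hunion : μ (⋃ s ∈ S, orthant s) = ∑ s ∈ S, μ (orthant s) := by
      refine measure_biUnion_finset₀ ?_ (fun s _ => (hmo s).nullMeasurableSet)
      intro s _ t _ hst
      exact hdisj s t hst
    have hle : μ (⋃ s ∈ S, orthant s) ≤ μ E := by
      refine measure_mono ?_
      refine Set.iUnion₂_subset fun s hs => ?_
      exact hsubE s (by simpa [hSdef] using hs)
    have hPE : P (X ⁻¹' E) = μ E := (Measure.map_apply hX hE).symm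
    have hfin : ∀ s ∈ S, μ (orthant s) ≠ ⊤ := fun s _ => measure_ne_top μ _
    calc 2 ^ m * q = ∑ _s ∈ S, q := by
            rw [Finset.sum_const, hcard, nsmul_eq_mul]
            push_cast
            ring
      _ ≤ ∑ s ∈ S, (P {ω | X ω ∈ orthant s}).toReal := by
            refine Finset.sum_le_sum fun s _ => ?_
            exact ciInf_le hbdd s
      _ = (∑ s ∈ S, μ (orthant s)).toReal := by
            rw [ENNReal.toReal_sum hfin]
            exact Finset.sum_congr rfl fun s _ => by rw [hPq]
      _ = (μ (⋃ s ∈ S, orthant s)).toReal := by rw [hunion]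
      _ ≤ (μ E).toReal := ENNReal.toReal_mono (measure_ne_top μ E) hle
      _ = (P (X ⁻¹' E)).toReal := by rw [hPE]
  -- lower bound on the infimum over half-spaces
  haveI : Nonempty ({-1, 1} : Set ℝ) := ⟨⟨1, by norm_num⟩⟩
  have hinf : 2 ^ m * q ≤
      ⨅ (j : Fin (m + 1)) (η : ({-1, 1} : Set ℝ)), (P {ω | (η : ℝ) * X ω j ≥ 0}).toReal := by
    refine le_ciInf fun j => le_ciInf fun η => ?_
    have hη : (η : ℝ) = -1 ∨ (η : ℝ) = 1 := η.2
    have hEmeas : MeasurableSet {x : Fin (m + 1) → ℝ | (η : ℝ) * x j ≥ 0} :=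
      measurableSet_le measurable_const (measurable_const.mul (measurable_pi_apply j))
    rcases hη with h | h
    · refine main j false _ hEmeas ?_
      intro s hs x hx
      have h1 := hx j
      rw [hs] at h1
      simp at h1
      show (η : ℝ) * x j ≥ 0
      rw [h]
      nlinarith
    · refine main j true _ hEmeas ?_
      intro s hs x hx
      have h1 := hx j
      rw [hs] at h1
      simp at h1
      show (η : ℝ) * x j ≥ 0
      rw [h]
      nlinarith
  -- finish with arithmetic
  refine max_le (mul_nonneg (by positivity) (le_max_left 0 _)) ?_
  have h2 : (1 : ℝ) / 2 - 2 ^ m * q = 2 ^ m * (1 / 2 ^ (m + 1) - q) := by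
    have : (2 : ℝ) ^ (m + 1) = 2 ^ m * 2 := by ring
    field_simp [this]
    ring
  calc (1 : ℝ) / 2 -
      ⨅ (j : Fin (m + 1)) (η : ({-1, 1} : Set ℝ)), (P {ω | (η : ℝ) * X ω j ≥ 0}).toReal
      ≤ 1 / 2 - 2 ^ m * q := by linarith
    _ = 2 ^ m * (1 / 2 ^ (m + 1) - q) := h2
    _ ≤ 2 ^ m * max 0 (1 / 2 ^ (m + 1) - q) := by
        exact mul_le_mul_of_nonneg_left (le_max_right 0 _) (by positivity)
end

section
/- Let θ̂^{(1)}, …, θ̂^{(B)} be independent and identically distributed random vectors in ℝ^d with θ̂^{(1)} − θ₀ MCH, and set δ = 2^{d−1}·max(0, 2^{−d} − min_{A ∈ O^d} P(θ̂^{(1)} − θ₀ ∈ A)), the orthant median bias of θ̂^{(1)} about θ₀. Then L(B,δ;d) ≤ P(θ₀ ∉ Rect-Hull_B) ≤ U(B,δ;d). -/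
/-! With `X_k = θ̂^{(k)} - θ₀`, the hull misses `θ₀` exactly when one of the events
`E_j = {all X_k j have the same strict sign}` occurs. Inclusion–exclusion over the coordinates
writes the miscoverage as `Σ_{T ≠ ∅} (-1)^{|T|+1} P(⋂_{j ∈ T} E_j)`, and by independence
`P(⋂_{j ∈ T} E_j) = Σ_ε q_ε^B`, where the `q_ε` are the probabilities of the `2^{|T|}` strict sign
cells of `X_1` on the coordinates in `T`. By MCH they sum to one, and each cell contains
`2^{d-|T|}` orthants up to a null set, so `q_ε ≥ 2^{-|T|} - δ 2^{1-|T|}`. Jensen gives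
`Σ q_ε^B ≥ 2^{|T|} 2^{-|T|B}`, and convexity of `x ↦ x^B` makes `Σ q_ε^B` largest when all but one
`q_ε` sit at the lower bound, which is `g_{|T|}(δ)`. Bounding the odd layers of the
inclusion–exclusion sum from one side and the even layers from the other gives `L` and `U`. -/

open MeasureTheory ProbabilityTheory

/-- `g_j(δ) = (2^j − 1)(2^{−j} − δ 2^{1−j})^B + (2^{−j} + (2^j − 1) δ 2^{1−j})^B`. -/
noncomputable def gfun (B j : ℕ) (δ : ℝ) : ℝ :=
  ((2 : ℝ) ^ j - 1) * (1 / 2 ^ j - δ * (2 / 2 ^ j)) ^ B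
    + (1 / 2 ^ j + ((2 : ℝ) ^ j - 1) * δ * (2 / 2 ^ j)) ^ B

/-- `L(B,δ;d) = Σ_{1≤j≤d, j odd} C(d,j) 2^j 2^{−jB} − Σ_{1≤j≤d, j even} C(d,j) g_j(δ)`. -/
noncomputable def Lfun (B d : ℕ) (δ : ℝ) : ℝ :=
  ∑ j ∈ (Finset.Icc 1 d).filter (fun j => Odd j),
      (d.choose j : ℝ) * 2 ^ j * (1 / 2 ^ j) ^ B
    - ∑ j ∈ (Finset.Icc 1 d).filter (fun j => Even j), (d.choose j : ℝ) * gfun B j δ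

/-- `U(B,δ;d) = Σ_{1≤j≤d, j odd} C(d,j) g_j(δ) − Σ_{1≤j≤d, j even} C(d,j) 2^j 2^{−jB}`. -/
noncomputable def Ufun (B d : ℕ) (δ : ℝ) : ℝ :=
  ∑ j ∈ (Finset.Icc 1 d).filter (fun j => Odd j), (d.choose j : ℝ) * gfun B j δ
    - ∑ j ∈ (Finset.Icc 1 d).filter (fun j => Even j),
        (d.choose j : ℝ) * 2 ^ j * (1 / 2 ^ j) ^ B

open Finset

theorem ConvexOn.map_add_add_map_add_le {f : ℝ → ℝ} {m a b : ℝ} (hf : ConvexOn ℝ (Set.Ici m) f)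
    (ha : 0 ≤ a) (hb : 0 ≤ b) : f (m + a) + f (m + b) ≤ f m + f (m + a + b) := by
  rcases (add_nonneg ha hb).eq_or_lt with hab | hab
  · obtain ⟨rfl, rfl⟩ : a = 0 ∧ b = 0 := ⟨by linarith, by linarith⟩
    simp
  have hm : m ∈ Set.Ici m := Set.self_mem_Ici
  have hM : m + a + b ∈ Set.Ici m := by simp only [Set.mem_Ici]; linarith
  have hsum : a / (a + b) + b / (a + b) = 1 := by field_simp
  have h₁ := hf.2 hM hm (by positivity) (by positivity) hsum
  have h₂ := hf.2 hM hm (by positivity) (by positivity) ((add_comm _ _).trans hsum)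
  simp only [smul_eq_mul] at h₁ h₂
  rw [show a / (a + b) * (m + a + b) + b / (a + b) * m = m + a by field_simp; ring] at h₁
  rw [show b / (a + b) * (m + a + b) + a / (a + b) * m = m + b by field_simp; ring] at h₂
  calc f (m + a) + f (m + b)
      ≤ (a / (a + b) + b / (a + b)) * (f m + f (m + a + b)) := by linarith
    _ = f m + f (m + a + b) := by rw [hsum, one_mul]

theorem ConvexOn.sum_map_add_le {ι : Type*} {f : ℝ → ℝ} {m : ℝ} (hf : ConvexOn ℝ (Set.Ici m) f)
    (s : Finset ι) {r : ι → ℝ} (hr : ∀ i ∈ s, 0 ≤ r i) :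
    ∑ i ∈ s, f (m + r i) ≤ (#s - 1 : ℝ) * f m + f (m + ∑ i ∈ s, r i) := by
  classical
  induction s using Finset.induction_on with
  | empty => simp
  | insert j s hj ih =>
    rw [sum_insert hj, sum_insert hj, card_insert_of_notMem hj, ← add_assoc]
    have := hf.map_add_add_map_add_le (hr j (mem_insert_self j s))
      (sum_nonneg fun i hi => hr i (mem_insert_of_mem hi))
    have := ih fun i hi => hr i (mem_insert_of_mem hi)
    push_cast
    linarith

theorem sum_pow_le_of_le_of_sum_eq_one {ι : Type*} {s : Finset ι} {q : ι → ℝ} {m : ℝ}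
    (hm : 0 ≤ m) (hq : ∀ i ∈ s, m ≤ q i) (hsum : ∑ i ∈ s, q i = 1) (B : ℕ) :
    ∑ i ∈ s, q i ^ B ≤ (#s - 1 : ℝ) * m ^ B + (1 - (#s - 1 : ℝ) * m) ^ B := by
  have hf : ConvexOn ℝ (Set.Ici m) (· ^ B) :=
    (convexOn_pow B).subset (Set.Ici_subset_Ici.2 hm) (convex_Ici m)
  have := hf.sum_map_add_le s (r := fun i => q i - m) fun i hi => sub_nonneg.2 (hq i hi)
  simp only [add_sub_cancel, sum_sub_distrib, hsum, sum_const, nsmul_eq_mul] at this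
  convert this using 3
  ring

theorem card_mul_one_div_card_pow_le_sum_pow {ι : Type*} {s : Finset ι} {q : ι → ℝ}
    (hq : ∀ i ∈ s, 0 ≤ q i) (hsum : ∑ i ∈ s, q i = 1) (B : ℕ) :
    (#s : ℝ) * (1 / #s) ^ B ≤ ∑ i ∈ s, q i ^ B := by
  rcases B with _ | n
  · simp
  have hs : (#s : ℝ) ≠ 0 := by
    rintro h
    simp [card_eq_zero.1 (Nat.cast_eq_zero.1 h)] at hsum
  have := pow_sum_div_card_le_sum_pow hq n
  rw [hsum, one_pow] at this
  calc (#s : ℝ) * (1 / #s) ^ (n + 1)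
      = 1 / (#s : ℝ) ^ n := by
        rw [one_div_pow, pow_succ', mul_one_div, div_mul_cancel_left₀ hs, one_div]
    _ ≤ _ := this

theorem sum_powerset_filter_nonempty_eq_sum_Icc {ι M : Type*} [Fintype ι] [AddCommMonoid M]
    (f : Finset ι → M) :
    ∑ T ∈ univ.powerset with T.Nonempty, f T =
      ∑ j ∈ Icc 1 (Fintype.card ι), ∑ T ∈ powersetCard j univ, f T := by
  classical
  rw [← sum_fiberwise_of_maps_to (g := card) (t := Icc 1 (Fintype.card ι))]
  · refine sum_congr rfl fun j hj => sum_congr ?_ fun _ _ => rfl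
    ext T
    simp only [mem_filter, mem_powerset, subset_univ, true_and, mem_powersetCard]
    exact ⟨And.right, fun h => ⟨card_pos.1 (h ▸ (mem_Icc.1 hj).1), h⟩⟩
  · intro T hT
    simp only [mem_filter] at hT
    exact mem_Icc.2 ⟨card_pos.2 hT.2, card_le_univ T⟩

theorem sum_neg_one_pow_succ_mul_eq_sub (s : Finset ℕ) (W : ℕ → ℝ) :
    ∑ j ∈ s, (-1) ^ (j + 1) * W j = ∑ j ∈ s with Odd j, W j - ∑ j ∈ s with Even j, W j := by
  rw [← sum_filter_add_sum_filter_not s Odd, sub_eq_add_neg, ← sum_neg_distrib]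
  simp only [Nat.not_odd_iff_even]
  congr 1 <;> refine sum_congr rfl fun j hj => ?_
  · rw [(mem_filter.1 hj).2.add_one.neg_one_pow, one_mul]
  · rw [(mem_filter.1 hj).2.add_one.neg_one_pow, neg_one_mul]

theorem alternating_sum_powerset_bounds {ι : Type*} [Fintype ι] {w : Finset ι → ℝ}
    {a b : ℕ → ℝ} (hw : ∀ T : Finset ι, T.Nonempty → a #T ≤ w T ∧ w T ≤ b #T) :
    ∑ j ∈ Icc 1 (Fintype.card ι) with Odd j, ((Fintype.card ι).choose j : ℝ) * a j
        - ∑ j ∈ Icc 1 (Fintype.card ι) with Even j, ((Fintype.card ι).choose j : ℝ) * b j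
      ≤ ∑ T ∈ univ.powerset with T.Nonempty, (-1) ^ (#T + 1) * w T ∧
    ∑ T ∈ univ.powerset with T.Nonempty, (-1) ^ (#T + 1) * w T
      ≤ ∑ j ∈ Icc 1 (Fintype.card ι) with Odd j, ((Fintype.card ι).choose j : ℝ) * b j
        - ∑ j ∈ Icc 1 (Fintype.card ι) with Even j, ((Fintype.card ι).choose j : ℝ) * a j := by
  have hlayer : ∀ j ∈ Icc 1 (Fintype.card ι),
      ((Fintype.card ι).choose j : ℝ) * a j ≤ ∑ T ∈ powersetCard j univ, w T ∧
        ∑ T ∈ powersetCard j univ, w T ≤ ((Fintype.card ι).choose j : ℝ) * b j := by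
    intro j hj
    have hT : ∀ T ∈ powersetCard j (univ : Finset ι), T.Nonempty ∧ #T = j := fun T hT =>
      ⟨card_pos.1 ((mem_powersetCard.1 hT).2 ▸ (mem_Icc.1 hj).1), (mem_powersetCard.1 hT).2⟩
    rw [← card_univ, ← card_powersetCard, ← nsmul_eq_mul, ← nsmul_eq_mul]
    refine ⟨card_nsmul_le_sum _ _ _ fun T h => ?_, sum_le_card_nsmul _ _ _ fun T h => ?_⟩
    · exact (hT T h).2 ▸ (hw T (hT T h).1).1
    · exact (hT T h).2 ▸ (hw T (hT T h).1).2
  have hsum : ∑ T ∈ univ.powerset with T.Nonempty, (-1) ^ (#T + 1) * w T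
      = ∑ j ∈ Icc 1 (Fintype.card ι) with Odd j, ∑ T ∈ powersetCard j univ, w T
        - ∑ j ∈ Icc 1 (Fintype.card ι) with Even j, ∑ T ∈ powersetCard j univ, w T := by
    rw [sum_powerset_filter_nonempty_eq_sum_Icc, ← sum_neg_one_pow_succ_mul_eq_sub]
    refine sum_congr rfl fun j _ => ?_
    rw [mul_sum]
    exact sum_congr rfl fun T hT => by rw [(mem_powersetCard.1 hT).2]
  rw [hsum]
  refine ⟨sub_le_sub ?_ ?_, sub_le_sub ?_ ?_⟩ <;> gcongr with j hj
  exacts [(hlayer j (mem_filter.1 hj).1).1, (hlayer j (mem_filter.1 hj).1).2,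
    (hlayer j (mem_filter.1 hj).1).2, (hlayer j (mem_filter.1 hj).1).1]

section SignCell

variable {ι : Type*}

def signCell (T : Finset ι) (ε : T → Bool) : Set (ι → ℝ) :=
  {x | ∀ i : T, if ε i then 0 < x i else x i < 0}

theorem measurableSet_signCell (T : Finset ι) (ε : T → Bool) :
    MeasurableSet (signCell T ε) := by
  simp only [signCell, Set.ofPred_forall]
  refine MeasurableSet.iInter fun i => ?_
  split
  · exact measurableSet_lt measurable_const (measurable_pi_apply (i : ι))
  · exact measurableSet_lt (measurable_pi_apply (i : ι)) measurable_const

theorem disjoint_signCell {T : Finset ι} {ε ε' : T → Bool} (h : ε ≠ ε') :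
    Disjoint (signCell T ε) (signCell T ε') := by
  obtain ⟨i, hi⟩ := Function.ne_iff.1 h
  refine Set.disjoint_left.2 fun x hx hx' => ?_
  have h₁ := hx i
  have h₂ := hx' i
  cases hε : ε i <;> cases hε' : ε' i <;> simp [hε, hε'] at h₁ h₂ hi <;> linarith

theorem mem_iUnion_signCell {T : Finset ι} {x : ι → ℝ} (hx : ∀ j, x j ≠ 0) :
    x ∈ ⋃ ε, signCell T ε := by
  refine Set.mem_iUnion.2 ⟨fun i => decide (0 < x i), fun i => ?_⟩
  rcases (hx i).lt_or_gt with h | h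
  · simp [h.not_gt, h]
  · simp [h]

theorem sum_measureReal_signCell [Fintype ι] [DecidableEq ι] (ν : Measure (ι → ℝ))
    [IsProbabilityMeasure ν] (hν : ν {x | ∃ j, x j = 0} = 0) (T : Finset ι) :
    ∑ ε, ν.real (signCell T ε) = 1 := by
  rw [← measureReal_iUnion_fintype (fun ε ε' h => disjoint_signCell h) (measurableSet_signCell T)]
  refine (measureReal_congr (ae_eq_univ.2 (measure_mono_null ?_ hν))).trans probReal_univ
  exact fun x hx => not_not.1 fun h => hx (mem_iUnion_signCell fun j hj => h ⟨j, hj⟩)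

theorem pow_mul_le_measureReal_signCell [Fintype ι] (ν : Measure (ι → ℝ))
    [IsFiniteMeasure ν] {c : ℝ} (hc : ∀ s : ι → Bool, c ≤ ν.real (signCell univ fun i => s i))
    (T : Finset ι) (ε : T → Bool) :
    2 ^ (Fintype.card ι - #T) * c ≤ ν.real (signCell T ε) := by
  classical
  set F := Fintype.piFinset fun i => if h : i ∈ T then {ε ⟨i, h⟩} else univ
  have hcard : #F = 2 ^ (Fintype.card ι - #T) := by
    rw [Fintype.card_piFinset]
    have : ∀ i, #(if h : i ∈ T then {ε ⟨i, h⟩} else (univ : Finset Bool)) =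
        if i ∈ T then 1 else 2 := fun i => by split_ifs <;> rfl
    simp only [this]
    simp [prod_ite, filter_not, card_sdiff]
  have hsub : ∀ s ∈ F, signCell univ (fun i => s i) ⊆ signCell T ε := by
    intro s hs x hx i
    have := Fintype.mem_piFinset.1 hs i
    simp only [i.2, dite_true, mem_singleton] at this
    simpa [this] using hx ⟨i, mem_univ _⟩
  have hdisj : (F : Set (ι → Bool)).PairwiseDisjoint fun s => signCell univ fun i => s i :=
    fun s _ s' _ h => disjoint_signCell fun h' => h (funext fun i => congrFun h' ⟨i, mem_univ i⟩)
  calc 2 ^ (Fintype.card ι - #T) * c = #F • c := by rw [hcard, nsmul_eq_mul]; push_cast; ring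
    _ ≤ ∑ s ∈ F, ν.real (signCell univ fun i => s i) := card_nsmul_le_sum _ _ _ fun s _ => hc s
    _ = ν.real (⋃ s ∈ F, signCell univ fun i => s i) :=
      (measureReal_biUnion_finset hdisj fun s _ => measurableSet_signCell _ _).symm
    _ ≤ ν.real (signCell T ε) := measureReal_mono (Set.iUnion₂_subset hsub)

end SignCell

theorem measurableSet_orthant {d : ℕ} (s : Fin d → Bool) : MeasurableSet (orthant s) := by
  simp only [orthant, Set.ofPred_forall]
  refine MeasurableSet.iInter fun i => ?_
  split
  · exact measurableSet_le measurable_const (measurable_pi_apply i)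
  · exact measurableSet_le (measurable_pi_apply i) measurable_const

theorem measureReal_orthant_le_signCell {d : ℕ} (ν : Measure (Fin d → ℝ)) [IsFiniteMeasure ν]
    (hν : ν {x | ∃ j, x j = 0} = 0) (s : Fin d → Bool) :
    ν.real (orthant s) ≤ ν.real (signCell univ fun i => s i) := by
  have hsub : orthant s ⊆ (signCell univ fun i => s i) ∪ {x | ∃ j, x j = 0} := by
    intro x hx
    by_cases hz : ∃ j, x j = 0
    · exact Or.inr hz
    · refine Or.inl fun i => ?_
      have := hx i
      rw [not_exists] at hz
      cases h : s i <;> simp only [h, Bool.false_eq_true, if_true, if_false] at this ⊢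
      · exact this.lt_of_ne (hz i)
      · exact this.lt_of_ne' (hz i)
  calc ν.real (orthant s) ≤ ν.real ((signCell univ fun i => s i) ∪ {x | ∃ j, x j = 0}) :=
        measureReal_mono hsub
    _ ≤ ν.real (signCell univ fun i => s i) + ν.real {x | ∃ j, x j = 0} := measureReal_union_le _ _
    _ = ν.real (signCell univ fun i => s i) := by simp [measureReal_def, hν]

theorem sum_pow_bounds_of_card_eq_two_pow {ι : Type*} {s : Finset ι} {q : ι → ℝ} {j : ℕ} {δ : ℝ}
    (hδ : δ ≤ 1 / 2) (hcard : #s = 2 ^ j) (hsum : ∑ i ∈ s, q i = 1)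
    (hq : ∀ i ∈ s, 1 / 2 ^ j - δ * (2 / 2 ^ j) ≤ q i) (B : ℕ) :
    2 ^ j * (1 / 2 ^ j) ^ B ≤ ∑ i ∈ s, q i ^ B ∧ ∑ i ∈ s, q i ^ B ≤ gfun B j δ := by
  have hm : 0 ≤ 1 / 2 ^ j - δ * (2 / 2 ^ j) := by
    rw [mul_div_assoc', sub_nonneg]
    gcongr
    linarith
  have hcard' : (#s : ℝ) = 2 ^ j := by exact_mod_cast hcard
  refine ⟨?_, ?_⟩
  · simpa only [hcard'] using
      card_mul_one_div_card_pow_le_sum_pow (fun i hi => hm.trans (hq i hi)) hsum B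
  · convert sum_pow_le_of_le_of_sum_eq_one hm hq hsum B using 1
    rw [gfun, hcard']
    congr 2
    field_simp
    ring

noncomputable def orthantMedianBias {κ : Type*} (d : ℕ) (p : κ → ℝ) : ℝ :=
  2 ^ (d - 1) * max 0 (1 / 2 ^ d - ⨅ s, p s)

section OrthantMedianBias

variable {κ : Type*} {d : ℕ} {p : κ → ℝ}

theorem orthantMedianBias_mul_eq (hd : 1 ≤ d) :
    orthantMedianBias d p * (2 / 2 ^ d) = max 0 (1 / 2 ^ d - ⨅ s, p s) := by
  rw [orthantMedianBias, mul_comm, ← mul_assoc, div_mul_eq_mul_div, ← pow_succ',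
    Nat.sub_add_cancel hd, div_self (by positivity), one_mul]

theorem orthantMedianBias_le_half (hd : 1 ≤ d) (hp : ∀ s, 0 ≤ p s) :
    orthantMedianBias d p ≤ 1 / 2 := by
  have h := orthantMedianBias_mul_eq (p := p) hd
  have : max 0 (1 / 2 ^ d - ⨅ s, p s) ≤ 1 / 2 ^ d :=
    max_le (by positivity) (sub_le_self _ (Real.iInf_nonneg hp))
  rw [← h, mul_div_assoc', div_le_div_iff_of_pos_right (by positivity)] at this
  linarith

theorem one_div_two_pow_sub_orthantMedianBias_le [Finite κ] (hd : 1 ≤ d) (s : κ) :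
    1 / 2 ^ d - orthantMedianBias d p * (2 / 2 ^ d) ≤ p s := by
  rw [orthantMedianBias_mul_eq hd]
  linarith [le_max_right 0 (1 / 2 ^ d - ⨅ s, p s), ciInf_le (Set.finite_range p).bddBelow s]

end OrthantMedianBias

section SameSign

variable {Ω ι κ : Type*} {X : κ → Ω → ι → ℝ}

def sameSign (X : κ → Ω → ι → ℝ) (i : ι) : Set Ω :=
  {ω | (∀ k, 0 < X k ω i) ∨ ∀ k, X k ω i < 0}

theorem measurableSet_sameSign [MeasurableSpace Ω] [Countable κ] (hXm : ∀ k, Measurable (X k))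
    (i : ι) : MeasurableSet (sameSign X i) := by
  simp only [sameSign, Set.ofPred_or, Set.ofPred_forall]
  exact (MeasurableSet.iInter fun k => measurableSet_lt measurable_const
      ((measurable_pi_apply i).comp (hXm k))).union
    (MeasurableSet.iInter fun k => measurableSet_lt ((measurable_pi_apply i).comp (hXm k))
      measurable_const)

theorem biInter_sameSign_eq_iUnion_signCell (T : Finset ι) :
    ⋂ i ∈ T, sameSign X i = ⋃ ε : T → Bool, ⋂ k, X k ⁻¹' signCell T ε := by
  classical
  ext ω
  simp only [Set.mem_iInter, Set.mem_iUnion, Set.mem_preimage, signCell, sameSign,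
    Set.mem_ofPred_eq]
  constructor
  · intro h
    refine ⟨fun i => decide (∀ k, 0 < X k ω i), fun k i => ?_⟩
    by_cases hpos : ∀ k, 0 < X k ω i
    · simp [hpos]
    · simpa [hpos] using (h i i.2).resolve_left hpos k
  · rintro ⟨ε, hε⟩ i hi
    cases h : ε ⟨i, hi⟩
    · exact Or.inr fun k => by simpa [h] using hε k ⟨i, hi⟩
    · exact Or.inl fun k => by simpa [h] using hε k ⟨i, hi⟩

variable [MeasurableSpace Ω] {P : Measure Ω} {ν : Measure (ι → ℝ)}

theorem measureReal_iInter_preimage_eq_pow [Fintype κ] {E : Type*} [MeasurableSpace E]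
    {Y : κ → Ω → E} {μ : Measure E} (hYm : ∀ k, Measurable (Y k)) (hY : iIndepFun Y P)
    (hlaw : ∀ k, P.map (Y k) = μ) {A : Set E} (hA : MeasurableSet A) :
    P.real (⋂ k, Y k ⁻¹' A) = μ.real A ^ Fintype.card κ := by
  rw [measureReal_def, hY.meas_iInter fun k => ⟨A, hA, rfl⟩]
  simp_rw [← Measure.map_apply (hYm _) hA, hlaw, prod_const, card_univ, ENNReal.toReal_pow]
  rfl

theorem measureReal_biInter_sameSign_eq_sum_pow [Fintype κ] [Nonempty κ] [DecidableEq ι]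
    [IsFiniteMeasure P] (hXm : ∀ k, Measurable (X k)) (hX : iIndepFun X P)
    (hlaw : ∀ k, P.map (X k) = ν) (T : Finset ι) :
    P.real (⋂ i ∈ T, sameSign X i) = ∑ ε, ν.real (signCell T ε) ^ Fintype.card κ := by
  obtain ⟨k₀⟩ := ‹Nonempty κ›
  rw [biInter_sameSign_eq_iUnion_signCell, measureReal_iUnion_fintype]
  · exact sum_congr rfl fun ε _ =>
      measureReal_iInter_preimage_eq_pow hXm hX hlaw (measurableSet_signCell T ε)
  · exact fun ε ε' h => ((disjoint_signCell h).preimage (X k₀)).mono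
      (Set.iInter_subset _ k₀) (Set.iInter_subset _ k₀)
  · exact fun ε => MeasurableSet.iInter fun k => hXm k (measurableSet_signCell T ε)

theorem measureReal_biInter_sameSign_bounds [Fintype ι] [DecidableEq ι] [Fintype κ] [Nonempty κ]
    [IsFiniteMeasure P] [IsProbabilityMeasure ν] (hXm : ∀ k, Measurable (X k))
    (hX : iIndepFun X P) (hlaw : ∀ k, P.map (X k) = ν) (hν : ν {x | ∃ j, x j = 0} = 0)
    {δ : ℝ} (hδ : δ ≤ 1 / 2)
    (hfull : ∀ s : ι → Bool,
      1 / 2 ^ Fintype.card ι - δ * (2 / 2 ^ Fintype.card ι) ≤ ν.real (signCell univ fun i => s i))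
    (T : Finset ι) :
    2 ^ #T * (1 / 2 ^ #T) ^ Fintype.card κ ≤ P.real (⋂ i ∈ T, sameSign X i) ∧
      P.real (⋂ i ∈ T, sameSign X i) ≤ gfun (Fintype.card κ) #T δ := by
  rw [measureReal_biInter_sameSign_eq_sum_pow hXm hX hlaw]
  refine sum_pow_bounds_of_card_eq_two_pow hδ (by simp) (sum_measureReal_signCell ν hν T)
    (fun ε _ => le_trans (le_of_eq ?_) (pow_mul_le_measureReal_signCell ν hfull T ε)) _
  have h2 : (2 : ℝ) ^ Fintype.card ι = 2 ^ (Fintype.card ι - #T) * 2 ^ #T := by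
    rw [← pow_add, Nat.sub_add_cancel (card_le_univ T)]
  rw [h2]
  field_simp

theorem measureReal_iUnion_sameSign_bounds [Fintype ι] [Fintype κ] [Nonempty κ]
    [IsFiniteMeasure P] [IsProbabilityMeasure ν] (hXm : ∀ k, Measurable (X k))
    (hX : iIndepFun X P) (hlaw : ∀ k, P.map (X k) = ν) (hν : ν {x | ∃ j, x j = 0} = 0)
    {δ : ℝ} (hδ : δ ≤ 1 / 2)
    (hfull : ∀ s : ι → Bool,
      1 / 2 ^ Fintype.card ι - δ * (2 / 2 ^ Fintype.card ι) ≤ ν.real (signCell univ fun i => s i)) :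
    Lfun (Fintype.card κ) (Fintype.card ι) δ ≤ P.real (⋃ i, sameSign X i) ∧
      P.real (⋃ i, sameSign X i) ≤ Ufun (Fintype.card κ) (Fintype.card ι) δ := by
  classical
  have hIE := measureReal_biUnion_eq_sum_powerset (μ := P) (t := univ)
    fun i _ => measurableSet_sameSign hXm i
  simp only [mem_univ, Set.iUnion_true] at hIE
  simpa only [Lfun, Ufun, mul_assoc, hIE] using alternating_sum_powerset_bounds
    (w := fun T => P.real (⋂ i ∈ T, sameSign X i)) (a := fun j => 2 ^ j * (1 / 2 ^ j) ^ _)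
    (b := fun j => gfun _ j δ)
    fun T _ => measureReal_biInter_sameSign_bounds hXm hX hlaw hν hδ hfull T

end SameSign

/-- miscoverage bounds for the rectangular hull of `B` i.i.d. MCH estimators. -/
theorem rectHull_miscoverage_bounds
    {Ω : Type*} [MeasurableSpace Ω] (P : Measure Ω) [IsProbabilityMeasure P]
    {d B : ℕ} (hd : 1 ≤ d) (hB : 1 ≤ B)
    (θ : Fin B → Ω → Fin d → ℝ) (θ₀ : Fin d → ℝ)
    (hmeas : ∀ k, Measurable (θ k))
    (hindep : iIndepFun θ P)
    (hident : ∀ k, Measure.map (θ k) P = Measure.map (θ ⟨0, hB⟩) P)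
    (hMCH : P {ω | ∃ j, θ ⟨0, hB⟩ ω j - θ₀ j = 0} = 0)
    (δ : ℝ)
    (hδ : δ = 2 ^ (d - 1) * max 0 (1 / 2 ^ d -
        ⨅ s : Fin d → Bool,
          (P {ω | (fun j => θ ⟨0, hB⟩ ω j - θ₀ j) ∈ orthant s}).toReal)) :
    Lfun B d δ ≤
        (P {ω | ∃ j, (∀ k, θ₀ j < θ k ω j) ∨ (∀ k, θ k ω j < θ₀ j)}).toReal
      ∧ (P {ω | ∃ j, (∀ k, θ₀ j < θ k ω j) ∨ (∀ k, θ k ω j < θ₀ j)}).toReal ≤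
        Ufun B d δ := by
  set X : Fin B → Ω → Fin d → ℝ := fun k ω => θ k ω - θ₀
  have hXm : ∀ k, Measurable (X k) := fun k => (hmeas k).sub_const θ₀
  have hX : iIndepFun X P := hindep.comp (fun _ y => y - θ₀) fun _ => measurable_sub_const θ₀
  have : Nonempty (Fin B) := ⟨⟨0, hB⟩⟩
  set ν := P.map (X ⟨0, hB⟩)
  have : IsProbabilityMeasure ν := Measure.isProbabilityMeasure_map (hXm _).aemeasurable
  have hlaw : ∀ k, P.map (X k) = ν := fun k => by
    change P.map ((· - θ₀) ∘ θ k) = P.map ((· - θ₀) ∘ θ ⟨0, hB⟩)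
    rw [← Measure.map_map (measurable_sub_const θ₀) (hmeas k), hident k,
      Measure.map_map (measurable_sub_const θ₀) (hmeas _)]
  have hν : ν {x | ∃ j, x j = 0} = 0 := by
    rwa [Measure.map_apply (hXm _) (by measurability)]
  have hδν : δ = orthantMedianBias d fun s => ν.real (orthant s) := by
    simp only [hδ, orthantMedianBias, ν,
      map_measureReal_apply (hXm _) (measurableSet_orthant _)]
    rfl
  have hδ₁ : δ ≤ 1 / 2 := hδν ▸ orthantMedianBias_le_half hd fun s => measureReal_nonneg
  have hfull : ∀ s : Fin d → Bool,
      1 / 2 ^ d - δ * (2 / 2 ^ d) ≤ ν.real (signCell univ fun i => s i) :=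
    fun s => hδν ▸ (one_div_two_pow_sub_orthantMedianBias_le hd s).trans
      (measureReal_orthant_le_signCell ν hν s)
  have hmiss : {ω | ∃ j, (∀ k, θ₀ j < θ k ω j) ∨ (∀ k, θ k ω j < θ₀ j)} = ⋃ j, sameSign X j := by
    ext ω
    simp [X, sameSign, sub_pos, sub_neg]
  rw [← measureReal_def, hmiss]
  simpa only [Fintype.card_fin] using measureReal_iUnion_sameSign_bounds hXm hX hlaw hν hδ₁
    (by simpa only [Fintype.card_fin] using hfull)
end

section
/- Let μ and ν be Borel probability measures on ℝ^d such that μ ⪯_MCH ν (in particular, if ν is obtained from μ by a single elementary operation). If X_1,…,X_B are i.i.d. with law μ and Y_1,…,Y_B are i.i.d. with law ν, then P(0 ∉ ∏_{j=1}^d [min_{1≤i≤B} (X_i)_j, max_{1≤i≤B} (X_i)_j]) ≤ P(0 ∉ ∏_{j=1}^d [min_{1≤i≤B} (Y_i)_j, max_{1≤i≤B} (Y_i)_j]). -/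
open MeasureTheory ProbabilityTheory

/-- Coordinatewise sign vector of `x ∈ ℝ^d`, valued in `{−1,0,1}^d`. -/
noncomputable def signVec {d : ℕ} (x : Fin d → ℝ) : Fin d → SignType :=
  fun j => SignType.sign (x j)

/-- The mass that `μ` gives to the set of points with sign pattern `η`. -/
noncomputable def sgnMass {d : ℕ} (μ : Measure (Fin d → ℝ)) (η : Fin d → SignType) : ℝ :=
  (μ {x | signVec x = η}).toReal

/-- `ν` is obtained from `μ` by an elementary operation: a mass `q` is moved from the sign
pattern `η ∈ U_d \ V_d` to a sign pattern `η′` with `η ⪯_s η′`. -/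
def ElemOp {d : ℕ} (μ ν : Measure (Fin d → ℝ)) : Prop :=
  ∃ (q : ℝ) (η η' : Fin d → SignType),
    0 ≤ q ∧ (∃ j, η j = 0) ∧ (∀ j, η j ≠ 0 → η' j = η j) ∧
    (∀ γ, γ ≠ η → γ ≠ η' → sgnMass ν γ = sgnMass μ γ) ∧
    q ≤ sgnMass μ η ∧
    sgnMass ν η = sgnMass μ η - q ∧
    sgnMass ν η' = sgnMass μ η' + q

/-- `μ ⪯_MCH ν` : `ν` is obtained from `μ` by a finite sequence of elementary operations. -/
def MCHle {d : ℕ} (μ ν : Measure (Fin d → ℝ)) : Prop :=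
  Relation.ReflTransGen ElemOp μ ν

/-- A measure on `ℝ^d` is MCH if it puts no mass on the coordinate hyperplanes. -/
def IsMCH {d : ℕ} (ν : Measure (Fin d → ℝ)) : Prop :=
  ν {x | ∃ j, x j = 0} = 0

/-- The element of `V_d = {−1,1}^d` associated with `b : Fin d → Bool`. -/
def orthSign {d : ℕ} (b : Fin d → Bool) : Fin d → SignType :=
  fun j => if b j then 1 else -1

/-- The general orthant median bias `OMB(μ)`. -/
noncomputable def OMB {d : ℕ} (μ : Measure (Fin d → ℝ)) : ℝ :=
  sInf {r | ∃ ν : Measure (Fin d → ℝ), IsProbabilityMeasure ν ∧ IsMCH ν ∧ MCHle μ ν ∧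
    r = 2 ^ (d - 1) * max 0 (1 / 2 ^ d - ⨅ b : Fin d → Bool, sgnMass ν (orthSign b))}

/-!
Only the sign patterns of the samples matter: the hull misses the origin iff some coordinate has
the same strict sign in all `B` samples. Hence the miscoverage probability is
`∑_{a ∈ A} ∏_i p (a i)`, where `p` is the law of the sign pattern and the set `A` of
"missing" tuples of patterns is closed under replacing an entry `η` by any `η' ⪰_s η`.
An elementary operation replaces `p` by `p - q δ_η + q δ_η'`. Swapping the factors from `p` to
the new law one sample at a time, each swap adds `q` times the weight of the tuples in `A` with
`a i = η'` minus that of the tuples with `a i = η`, which is nonnegative since `update · i η'`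
injects the latter into the former without changing the other factors.
-/

open Finset Function

section ProdMass

variable {ι α : Type*} [Fintype ι] [DecidableEq ι]

def prodMass (A : Finset (ι → α)) (f : ι → α → ℝ) : ℝ :=
  ∑ a ∈ A, ∏ i, f i (a i)

lemma prodMass_update (A : Finset (ι → α)) (f : ι → α → ℝ) (i : ι) (g : α → ℝ) :
    prodMass A (update f i g) = ∑ a ∈ A, g (a i) * ∏ k ∈ univ.erase i, f k (a k) := by
  refine sum_congr rfl fun a _ => ?_
  rw [← mul_prod_erase univ _ (mem_univ i), update_self]
  congr 1
  exact prod_congr rfl fun k hk => by rw [update_of_ne (ne_of_mem_erase hk)]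

lemma sum_filter_apply_eq_le [DecidableEq α] {A : Finset (ι → α)} {i : ι} {η η' : α}
    (hA : ∀ a ∈ A, a i = η → update a i η' ∈ A) {c : (ι → α) → ℝ} (hc₀ : ∀ a, 0 ≤ c a)
    (hc : ∀ a, c (update a i η') = c a) :
    ∑ a ∈ A with a i = η, c a ≤ ∑ a ∈ A with a i = η', c a := by
  have hinj : Set.InjOn (update · i η') (A.filter (· i = η) : Set (ι → α)) := by
    intro a ha b hb hab
    have ha : a i = η := (mem_filter.mp ha).2
    have hb : b i = η := (mem_filter.mp hb).2
    calc a = update (update a i η') i η := by rw [update_idem, ← ha, update_eq_self]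
      _ = update (update b i η') i η := congrArg (update · i η) hab
      _ = b := by rw [update_idem, ← hb, update_eq_self]
  calc ∑ a ∈ A with a i = η, c a
      = ∑ a ∈ (A.filter (· i = η)).image (update · i η'), c a := by
        rw [sum_image hinj]; exact sum_congr rfl fun a _ => (hc a).symm
    _ ≤ ∑ a ∈ A with a i = η', c a := by
        refine sum_le_sum_of_subset_of_nonneg ?_ fun a _ _ => hc₀ a
        intro b hb
        obtain ⟨a, ha, rfl⟩ := mem_image.mp hb
        obtain ⟨haA, hai⟩ := mem_filter.mp ha
        exact mem_filter.mpr ⟨hA a haA hai, update_self ..⟩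

lemma prodMass_update_le [DecidableEq α] {A : Finset (ι → α)} {i : ι} {η η' : α}
    (hA : ∀ a ∈ A, a i = η → update a i η' ∈ A) {f : ι → α → ℝ} (hf : ∀ k, 0 ≤ f k)
    {p : α → ℝ} {q : ℝ} (hq : 0 ≤ q) :
    prodMass A (update f i p) ≤ prodMass A (update f i (p - Pi.single η q + Pi.single η' q)) := by
  set c : (ι → α) → ℝ := fun a => ∏ k ∈ univ.erase i, f k (a k)
  have hc₀ : ∀ a, 0 ≤ c a := fun a => prod_nonneg fun k _ => hf k _
  have hc : ∀ a, c (update a i η') = c a := fun a =>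
    prod_congr rfl fun k hk => by rw [update_of_ne (ne_of_mem_erase hk)]
  have hmoved : ∀ θ,
      ∑ a ∈ A, (Pi.single θ q : α → ℝ) (a i) * c a = q * ∑ a ∈ A with a i = θ, c a := by
    intro θ
    rw [sum_filter, mul_sum]
    exact sum_congr rfl fun a _ => by rw [Pi.single_apply]; split_ifs <;> simp
  rw [prodMass_update, prodMass_update]
  simp only [Pi.add_apply, Pi.sub_apply, add_mul, sub_mul, sum_add_distrib, sum_sub_distrib]
  rw [hmoved, hmoved]
  linarith [mul_le_mul_of_nonneg_left (sum_filter_apply_eq_le hA hc₀ hc) hq]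

lemma prodMass_const_le [DecidableEq α] {A : Finset (ι → α)} {η η' : α}
    (hA : ∀ a ∈ A, ∀ i, a i = η → update a i η' ∈ A) {p : α → ℝ} {q : ℝ} (hq : 0 ≤ q)
    (hp : 0 ≤ p) (hp' : 0 ≤ p - Pi.single η q + Pi.single η' q) :
    prodMass A (fun _ => p) ≤ prodMass A (fun _ => p - Pi.single η q + Pi.single η' q) := by
  set p' := p - Pi.single η q + Pi.single η' q
  suffices hybrid : ∀ s : Finset ι,
      prodMass A (fun _ => p) ≤ prodMass A (fun k => if k ∈ s then p' else p) by
    simpa using hybrid univ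
  intro s
  induction s using Finset.induction_on with
  | empty => simp
  | insert i s hi ih =>
    set f : ι → α → ℝ := fun k => if k ∈ s then p' else p
    have hf : ∀ k, 0 ≤ f k := fun k => by dsimp only [f]; split_ifs <;> assumption
    have hpf : update f i p = f := by simp [f, hi]
    have hp'f : update f i p' = fun k => if k ∈ insert i s then p' else p := by
      ext k : 1; by_cases hk : k = i <;> simp [f, hk]
    calc prodMass A (fun _ => p) ≤ prodMass A (update f i p) := by rwa [hpf]
      _ ≤ prodMass A (update f i p') := prodMass_update_le (hA · · i) hf hq
      _ = _ := by rw [hp'f]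

end ProdMass

lemma ProbabilityTheory.iIndepFun.measureReal_mem_finset {Ω ι α : Type*} [MeasurableSpace Ω]
    {P : Measure Ω} [IsProbabilityMeasure P] [Fintype ι] [MeasurableSpace α] [MeasurableSingletonClass α]
    {W : ι → Ω → α} (hW : ∀ i, Measurable (W i)) (hind : iIndepFun W P) (A : Finset (ι → α)) :
    P.real {ω | (fun i => W i ω) ∈ A} = ∑ a ∈ A, ∏ i, P.real (W i ⁻¹' {a i}) := by
  have _ : ∀ i, IsProbabilityMeasure (P.map (W i)) := fun i =>
    Measure.isProbabilityMeasure_map (hW i).aemeasurable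
  have hjoint := hind.map_fun_eq_pi_map fun i => (hW i).aemeasurable
  have hmeas : Measurable fun ω i => W i ω := measurable_pi_lambda _ hW
  calc P.real {ω | (fun i => W i ω) ∈ A}
      = (P.map fun ω i => W i ω).real A := (map_measureReal_apply hmeas A.measurableSet).symm
    _ = ∑ a ∈ A, ∏ i, (P.map (W i)).real {a i} := by
        rw [hjoint, measureReal_def, ← sum_measure_singleton, ENNReal.toReal_sum]
        · simp [Measure.pi_singleton, ENNReal.toReal_prod, measureReal_def]
        · exact fun a _ => measure_ne_top _ _
    _ = ∑ a ∈ A, ∏ i, P.real (W i ⁻¹' {a i}) := by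
        simp only [map_measureReal_apply (hW _) (measurableSet_singleton _)]

instance : MeasurableSpace SignType := ⊤

instance : DiscreteMeasurableSpace SignType := ⟨fun _ => trivial⟩

lemma measurable_sign_real : Measurable (SignType.sign : ℝ → SignType) := by
  refine measurable_to_countable' fun s => ?_
  rcases s.trichotomy with rfl | rfl | rfl
  · simp only [Set.preimage, Set.mem_singleton_iff, sign_eq_neg_one_iff]
    exact measurableSet_Iio
  · simp only [Set.preimage, Set.mem_singleton_iff, sign_eq_zero_iff]
    exact measurableSet_singleton 0
  · simp only [Set.preimage, Set.mem_singleton_iff, sign_eq_one_iff]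
    exact measurableSet_Ioi

lemma measurable_signVec {d : ℕ} : Measurable (signVec (d := d)) :=
  measurable_pi_lambda _ fun j => measurable_sign_real.comp (measurable_pi_apply j)

open Classical in
noncomputable def rectHullMissSigns (d B : ℕ) : Finset (Fin B → Fin d → SignType) :=
  univ.filter fun a => ∃ j, (∀ i, a i j = 1) ∨ (∀ i, a i j = -1)

lemma update_mem_rectHullMissSigns {d B : ℕ} {a : Fin B → Fin d → SignType}
    (ha : a ∈ rectHullMissSigns d B) (i : Fin B) {θ : Fin d → SignType}
    (hθ : ∀ j, a i j ≠ 0 → θ j = a i j) : update a i θ ∈ rectHullMissSigns d B := by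
  simp only [rectHullMissSigns, mem_filter, mem_univ, true_and] at ha ⊢
  obtain ⟨j, hj⟩ := ha
  refine ⟨j, hj.imp (fun h k => ?_) (fun h k => ?_)⟩ <;>
    rcases eq_or_ne k i with rfl | hk <;> simp [*]

lemma sgnMass_nonneg {d : ℕ} (μ : Measure (Fin d → ℝ)) : 0 ≤ sgnMass μ :=
  fun _ => ENNReal.toReal_nonneg

lemma ElemOp.sgnMass_eq {d : ℕ} {μ ν : Measure (Fin d → ℝ)} (h : ElemOp μ ν) :
    ∃ (q : ℝ) (η η' : Fin d → SignType), 0 ≤ q ∧ (∀ j, η j ≠ 0 → η' j = η j) ∧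
      sgnMass ν = sgnMass μ - Pi.single η q + Pi.single η' q := by
  obtain ⟨q, η, η', hq, -, hs, hoff, -, hη, hη'⟩ := h
  refine ⟨q, η, η', hq, hs, funext fun γ => ?_⟩
  simp only [Pi.add_apply, Pi.sub_apply, Pi.single_apply]
  rcases eq_or_ne η η' with rfl | hne
  · obtain rfl : q = 0 := by linarith
    by_cases h : γ = η
    · simp [h, hη]
    · simp [h, hoff γ h h]
  by_cases h : γ = η
  · subst h; simp [hne, hη]
  by_cases h' : γ = η'
  · subst h'; simp [h, hη']
  simp [h, h', hoff γ h h']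

lemma measureReal_rectHullMiss_eq_prodMass {d B : ℕ} {μ : Measure (Fin d → ℝ)} {Ω : Type*}
    [MeasurableSpace Ω] {P : Measure Ω} [IsProbabilityMeasure P] {X : Fin B → Ω → Fin d → ℝ}
    (hX : ∀ i, Measurable (X i)) (hind : iIndepFun X P) (hlaw : ∀ i, P.map (X i) = μ) :
    P.real {ω | ∃ j, (∀ i, 0 < X i ω j) ∨ (∀ i, X i ω j < 0)}
      = prodMass (rectHullMissSigns d B) (fun _ => sgnMass μ) := by
  have hset : {ω | ∃ j, (∀ i, 0 < X i ω j) ∨ (∀ i, X i ω j < 0)}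
      = {ω | (fun i => signVec (X i ω)) ∈ rectHullMissSigns d B} := by
    ext ω
    simp [rectHullMissSigns, signVec, sign_eq_one_iff, sign_eq_neg_one_iff]
  rw [hset, prodMass]
  refine ((hind.comp (fun _ => signVec) fun _ => measurable_signVec).measureReal_mem_finset
    (fun i => measurable_signVec.comp (hX i)) _).trans
    (sum_congr rfl fun a _ => prod_congr rfl fun i _ => ?_)
  rw [← map_measureReal_apply (measurable_signVec.comp (hX i))
    (measurableSet_singleton _), ← Measure.map_map measurable_signVec (hX i), hlaw i,
    map_measureReal_apply measurable_signVec (measurableSet_singleton _)]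
  rfl

lemma MCHle.prodMass_rectHullMissSigns_le {d B : ℕ} {μ ν : Measure (Fin d → ℝ)}
    (h : MCHle μ ν) :
    prodMass (rectHullMissSigns d B) (fun _ => sgnMass μ)
      ≤ prodMass (rectHullMissSigns d B) (fun _ => sgnMass ν) := by
  induction h with
  | refl => exact le_rfl
  | @tail ν₁ ν₂ _ hstep ih =>
    obtain ⟨q, η, η', hq, hs, hν₂⟩ := hstep.sgnMass_eq
    have hmono : ∀ a ∈ rectHullMissSigns d B, ∀ i, a i = η →
        update a i η' ∈ rectHullMissSigns d B := fun a ha i hi => by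
      subst hi; exact update_mem_rectHullMissSigns ha i hs
    refine ih.trans ?_
    rw [hν₂]
    exact prodMass_const_le hmono hq (sgnMass_nonneg ν₁) (hν₂ ▸ sgnMass_nonneg ν₂)

theorem rectHull_miscoverage_mono_of_MCHle_general
    {d B : ℕ}
    (μ ν : Measure (Fin d → ℝ))
    (hle : MCHle μ ν)
    {Ω₁ : Type*} [MeasurableSpace Ω₁] (P₁ : Measure Ω₁) [IsProbabilityMeasure P₁]
    {Ω₂ : Type*} [MeasurableSpace Ω₂] (P₂ : Measure Ω₂) [IsProbabilityMeasure P₂]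
    (X : Fin B → Ω₁ → Fin d → ℝ) (Y : Fin B → Ω₂ → Fin d → ℝ)
    (hXmeas : ∀ i, Measurable (X i)) (hYmeas : ∀ i, Measurable (Y i))
    (hXindep : iIndepFun X P₁)
    (hYindep : iIndepFun Y P₂)
    (hXlaw : ∀ i, Measure.map (X i) P₁ = μ)
    (hYlaw : ∀ i, Measure.map (Y i) P₂ = ν) :
    (P₁ {ω | ∃ j, (∀ i, 0 < X i ω j) ∨ (∀ i, X i ω j < 0)}).toReal
      ≤ (P₂ {ω | ∃ j, (∀ i, 0 < Y i ω j) ∨ (∀ i, Y i ω j < 0)}).toReal := by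
  rw [← measureReal_def, ← measureReal_def,
    measureReal_rectHullMiss_eq_prodMass hXmeas hXindep hXlaw,
    measureReal_rectHullMiss_eq_prodMass hYmeas hYindep hYlaw]
  exact hle.prodMass_rectHullMissSigns_le

/-- if `μ ⪯_MCH ν`, then the probability that the rectangular hull of `B`
i.i.d. draws from `μ` misses the origin is at most the corresponding probability for `ν`. -/
theorem rectHull_miscoverage_mono_of_MCHle
    {d B : ℕ} (hd : 1 ≤ d) (hB : 1 ≤ B)
    (μ ν : Measure (Fin d → ℝ)) [IsProbabilityMeasure μ] [IsProbabilityMeasure ν]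
    (hle : MCHle μ ν)
    {Ω₁ : Type*} [MeasurableSpace Ω₁] (P₁ : Measure Ω₁) [IsProbabilityMeasure P₁]
    {Ω₂ : Type*} [MeasurableSpace Ω₂] (P₂ : Measure Ω₂) [IsProbabilityMeasure P₂]
    (X : Fin B → Ω₁ → Fin d → ℝ) (Y : Fin B → Ω₂ → Fin d → ℝ)
    (hXmeas : ∀ i, Measurable (X i)) (hYmeas : ∀ i, Measurable (Y i))
    (hXindep : iIndepFun X P₁)
    (hYindep : iIndepFun Y P₂)
    (hXlaw : ∀ i, Measure.map (X i) P₁ = μ)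
    (hYlaw : ∀ i, Measure.map (Y i) P₂ = ν) :
    (P₁ {ω | ∃ j, (∀ i, 0 < X i ω j) ∨ (∀ i, X i ω j < 0)}).toReal
      ≤ (P₂ {ω | ∃ j, (∀ i, 0 < Y i ω j) ∨ (∀ i, Y i ω j < 0)}).toReal :=
  rectHull_miscoverage_mono_of_MCHle_general μ ν hle P₁ P₂ X Y hXmeas hYmeas hXindep hYindep hXlaw
    hYlaw
end

section
/- Let d ≥ 1 and let θ̂^{(1)}, …, θ̂^{(B)} be independent and identically distributed random vectors in ℝ^d such that θ̂^{(1)} − θ₀ is MCH and has zero orthant median bias (i.e., P(θ̂^{(1)} − θ₀ ∈ A) = 2^{−d} for every closed orthant A ∈ O^d). Then P(θ₀ ∉ Rect-Hull_B) = 1 − (1 − 2^{−B+1})^d, and for α ∈ (0,1) this miscoverage is at most α if and only if B ≥ 1 − log₂(1 − (1−α)^{1/d}). -/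
open MeasureTheory ProbabilityTheory

/-!
Off the null set where some coordinate of some `θ k - θ₀` vanishes, `θ₀` escapes the rectangular
hull exactly when, in some coordinate `j`, the signs of `θ k j - θ₀ j` (`k = 1, …, B`) all agree.
Zero orthant median bias says that the sign pattern of one replicate is uniform on the `2^d`
patterns, so by independence the `B × d` sign matrix is uniform on its `2^{Bd}` values. Of these,
`(2^B - 2)^d` have no constant column, so the coverage probability is
`((2^B - 2) / 2^B)^d = (1 - 2^{1-B})^d`. The second claim solves this formula for `B`.
-/

open Finset

section Counting

variable {ι κ : Type*} [Fintype ι] [DecidableEq ι] [Fintype κ] [DecidableEq κ]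

theorem card_filter_forall_column {β : Type*} [Fintype β] (p : (ι → β) → Prop) [DecidablePred p] :
    #{σ : ι → κ → β | ∀ j, p fun i => σ i j} = #{c | p c} ^ Fintype.card κ := by
  calc #{σ : ι → κ → β | ∀ j, p fun i => σ i j}
      = #(Fintype.piFinset fun _ : κ => ({c | p c} : Finset (ι → β))) :=
        card_equiv (Equiv.piComm fun _ _ => β) fun _ => by
          simp only [mem_filter, mem_univ, true_and, Fintype.mem_piFinset]; rfl
    _ = _ := by simp [Fintype.card_piFinset]

theorem card_filter_exists_true_and_exists_false [Nonempty ι] :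
    #{c : ι → Bool | (∃ i, c i = true) ∧ ∃ i, c i = false} = 2 ^ Fintype.card ι - 2 := by
  have h : ({c : ι → Bool | (∃ i, c i = true) ∧ ∃ i, c i = false} : Finset _)
      = univ \ {fun _ => false, fun _ => true} := by
    ext c
    simp [funext_iff, and_comm]
  have hne : (fun _ : ι => false) ≠ fun _ => true := fun h =>
    Bool.false_ne_true (congrFun h (Classical.arbitrary ι))
  rw [h, card_sdiff_of_subset (subset_univ _), card_univ, Fintype.card_fun, Fintype.card_bool,
    card_pair hne]

end Counting

theorem natCast_two_pow_sub_two_pow_mul {n : ℕ} (hn : n ≠ 0) (d : ℕ) :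
    (((2 ^ n - 2) ^ d : ℕ) : ℝ) * (1 / 2 ^ d) ^ n = (1 - (2 : ℝ) ^ (1 - (n : ℤ))) ^ d := by
  have h2n : 2 ≤ 2 ^ n := Nat.le_self_pow hn 2
  have hzpow : (2 : ℝ) ^ (1 - (n : ℤ)) = 2 / 2 ^ n := by
    rw [zpow_sub₀ two_ne_zero, zpow_one, zpow_natCast]
  have hratio : ((2 : ℝ) ^ n - 2) / 2 ^ n = 1 - 2 / 2 ^ n := by field_simp
  rw [hzpow, ← hratio]
  push_cast [h2n]
  rw [div_pow, div_pow, ← pow_mul, ← pow_mul, mul_comm d n]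
  ring

theorem ProbabilityTheory.iIndepFun.measureReal_preimage_pi_singleton {Ω ι β : Type*}
    [MeasurableSpace Ω] {P : Measure Ω} [Fintype ι] [MeasurableSpace β] [MeasurableSingletonClass β]
    {Y : ι → Ω → β} (h : iIndepFun Y P) (σ : ι → β) :
    P.real ((fun ω i => Y i ω) ⁻¹' {σ}) = ∏ i, P.real (Y i ⁻¹' {σ i}) := by
  have hσ : (fun ω i => Y i ω) ⁻¹' {σ} = ⋂ i, Y i ⁻¹' {σ i} := by
    ext ω
    simp [funext_iff]
  rw [hσ, measureReal_def, h.meas_iInter fun i => ⟨{σ i}, measurableSet_singleton _, rfl⟩,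
    ENNReal.toReal_prod]
  rfl

noncomputable def signPattern {d : ℕ} (x : Fin d → ℝ) : Fin d → Bool := fun j => decide (0 < x j)

theorem measurable_signPattern {d : ℕ} : Measurable fun x : Fin d → ℝ => signPattern x := by
  refine measurable_pi_lambda _ fun j => measurable_to_bool ?_
  simp only [signPattern, Set.preimage, Set.mem_singleton_iff, decide_eq_true_eq]
  exact measurableSet_lt measurable_const (measurable_pi_apply j)

theorem signPattern_eq_iff_mem_orthant {d : ℕ} {x : Fin d → ℝ} (hx : ∀ j, x j ≠ 0)
    (s : Fin d → Bool) : signPattern x = s ↔ x ∈ orthant s := by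
  simp only [funext_iff, signPattern, orthant, Set.mem_ofPred_eq]
  refine forall_congr' fun j => ?_
  cases s j <;> simp [(hx j).symm.le_iff_lt]

theorem measureReal_signPattern_preimage {Ω : Type*} [MeasurableSpace Ω] {P : Measure Ω}
    {d : ℕ} {X : Ω → Fin d → ℝ} (hX : P {ω | ∃ j, X ω j = 0} = 0) (s : Fin d → Bool) :
    P.real ((signPattern ∘ X) ⁻¹' {s}) = P.real (X ⁻¹' orthant s) := by
  refine measureReal_congr (Filter.eventuallyEq_set.2 ?_)
  filter_upwards [measure_eq_zero_iff_ae_notMem.1 hX] with ω hω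
  push Not at hω
  exact signPattern_eq_iff_mem_orthant hω s

theorem exists_forall_pos_or_forall_neg_iff {ι : Type*} {d : ℕ} {x : ι → Fin d → ℝ}
    (hx : ∀ i j, x i j ≠ 0) :
    (∃ j, (∀ i, 0 < x i j) ∨ ∀ i, x i j < 0) ↔
      ¬ ∀ j, (∃ i, signPattern (x i) j = true) ∧ ∃ i, signPattern (x i) j = false := by
  have hneg : ∀ i j, x i j < 0 ↔ ¬ 0 < x i j := fun i j => by
    rw [not_lt, (hx i j).le_iff_lt]
  simp only [signPattern, hneg, decide_eq_true_eq, decide_eq_false_iff_not, not_forall, not_and_or,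
    not_exists, not_not, or_comm]

section IIDSigns

variable {Ω ι : Type*} [MeasurableSpace Ω] {P : Measure Ω} {d : ℕ} {X : ι → Ω → Fin d → ℝ}
  {i₀ : ι}

theorem ae_forall_coord_ne_zero [Countable ι] (hident : ∀ i, IdentDistrib (X i) (X i₀) P P)
    (hMCH : P {ω | ∃ j, X i₀ ω j = 0} = 0) : ∀ᵐ ω ∂P, ∀ i j, X i ω j ≠ 0 := by
  refine ae_all_iff.2 fun i => ?_
  have hZ : MeasurableSet {x : Fin d → ℝ | ∃ j, x j = 0} := by
    simpa only [Set.ofPred_exists] using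
      MeasurableSet.iUnion fun j => measurableSet_eq_fun (measurable_pi_apply j) measurable_const
  simpa using measure_eq_zero_iff_ae_notMem.1 (((hident i).measure_mem_eq hZ).trans hMCH)

theorem measureReal_signPattern_pi_preimage_singleton [Fintype ι] (hindep : iIndepFun X P)
    (hident : ∀ i, IdentDistrib (X i) (X i₀) P P) (hMCH : P {ω | ∃ j, X i₀ ω j = 0} = 0)
    (hzero : ∀ s, P.real (X i₀ ⁻¹' orthant s) = 1 / 2 ^ d) (σ : ι → Fin d → Bool) :
    P.real ((fun ω i => signPattern (X i ω)) ⁻¹' {σ}) = (1 / 2 ^ d) ^ Fintype.card ι := by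
  have hsign : ∀ i s, P.real ((signPattern ∘ X i) ⁻¹' {s}) = 1 / 2 ^ d := fun i s => by
    rw [← hzero s, ← measureReal_signPattern_preimage hMCH]
    exact congrArg ENNReal.toReal
      (((hident i).comp measurable_signPattern).measure_mem_eq (measurableSet_singleton s))
  refine ((hindep.comp _ fun _ => measurable_signPattern).measureReal_preimage_pi_singleton
    σ).trans ?_
  simp [hsign]

theorem measureReal_exists_forall_pos_or_forall_neg [IsProbabilityMeasure P] [Fintype ι]
    (hmeas : ∀ i, Measurable (X i)) (hindep : iIndepFun X P)
    (hident : ∀ i, IdentDistrib (X i) (X i₀) P P) (hMCH : P {ω | ∃ j, X i₀ ω j = 0} = 0)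
    (hzero : ∀ s, P.real (X i₀ ⁻¹' orthant s) = 1 / 2 ^ d) :
    P.real {ω | ∃ j, (∀ i, 0 < X i ω j) ∨ ∀ i, X i ω j < 0}
      = 1 - (1 - (2 : ℝ) ^ (1 - (Fintype.card ι : ℤ))) ^ d := by
  classical
  have : Nonempty ι := ⟨i₀⟩
  let M : Ω → ι → Fin d → Bool := fun ω i => signPattern (X i ω)
  have hM : Measurable M := measurable_pi_lambda _ fun i => measurable_signPattern.comp (hmeas i)
  set G : Finset (ι → Fin d → Bool) := {σ | ∀ j, (∃ i, σ i j = true) ∧ ∃ i, σ i j = false}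
  have hcover : ({ω | ∃ j, (∀ i, 0 < X i ω j) ∨ ∀ i, X i ω j < 0} : Set Ω) =ᵐ[P]
      ((M ⁻¹' G)ᶜ : Set Ω) :=
    Filter.eventuallyEq_set.2 <| (ae_forall_coord_ne_zero hident hMCH).mono fun ω hω => by
      simp only [Set.mem_ofPred_eq, Set.mem_compl_iff, Set.mem_preimage, Finset.mem_coe, G,
        Finset.mem_filter, Finset.mem_univ, true_and]
      exact exists_forall_pos_or_forall_neg_iff hω
  have hG : P.real (M ⁻¹' G) = #G * (1 / 2 ^ d) ^ Fintype.card ι := by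
    rw [← sum_measureReal_preimage_singleton G fun σ _ => hM (measurableSet_singleton σ)]
    simp [M, measureReal_signPattern_pi_preimage_singleton hindep hident hMCH hzero]
  have hcard : #G = (2 ^ Fintype.card ι - 2) ^ d := by
    calc #G = #{c : ι → Bool | (∃ i, c i = true) ∧ ∃ i, c i = false} ^ Fintype.card (Fin d) := by
          -- `convert` reconciles `Nat.decidableForallFin` with the lemma's `Fintype` instance
          convert card_filter_forall_column (κ := Fin d)
            fun c : ι → Bool => (∃ i, c i = true) ∧ ∃ i, c i = false
      _ = _ := by rw [card_filter_exists_true_and_exists_false, Fintype.card_fin]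
  rw [measureReal_congr hcover, probReal_compl_eq_one_sub (hM G.measurableSet), hG, hcard,
    natCast_two_pow_sub_two_pow_mul Fintype.card_ne_zero]

end IIDSigns

theorem one_sub_one_sub_pow_le_iff {p α : ℝ} {d : ℕ} (hd : d ≠ 0) (hp : p ≤ 1) (hα : α ≤ 1) :
    1 - (1 - p) ^ d ≤ α ↔ p ≤ 1 - (1 - α) ^ (d : ℝ)⁻¹ := by
  rw [sub_le_comm, le_sub_comm, Real.rpow_inv_le_iff_of_pos (by linarith) (by linarith)
    (by positivity), Real.rpow_natCast]

theorem one_sub_one_sub_two_zpow_pow_le_iff {d B : ℕ} (hd : d ≠ 0) (hB : 1 ≤ B) {α : ℝ}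
    (hα : α ∈ Set.Ioo (0 : ℝ) 1) :
    1 - (1 - (2 : ℝ) ^ (1 - (B : ℤ))) ^ d ≤ α ↔
      1 - Real.logb 2 (1 - (1 - α) ^ (d : ℝ)⁻¹) ≤ B := by
  have hx : 0 < 1 - (1 - α) ^ (d : ℝ)⁻¹ :=
    sub_pos.2 (Real.rpow_lt_one (by linarith [hα.2]) (by linarith [hα.1]) (by positivity))
  rw [one_sub_one_sub_pow_le_iff hd (zpow_le_one_of_nonpos₀ one_le_two (by omega)) hα.2.le,
    sub_le_comm, Real.le_logb_iff_rpow_le one_lt_two hx, ← Real.rpow_intCast]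
  push_cast
  rfl

/-- for i.i.d. MCH estimators with zero orthant median bias (every closed
orthant has probability exactly `2^{−d}`), the miscoverage of the rectangular hull equals
`1 − (1 − 2^{−B+1})^d`, and it is at most `α` iff `B ≥ 1 − log₂(1 − (1−α)^{1/d})`. -/
theorem rectHull_miscoverage_zero_bias
    {Ω : Type*} [MeasurableSpace Ω] (P : Measure Ω) [IsProbabilityMeasure P]
    {d B : ℕ} (hd : 1 ≤ d) (hB : 1 ≤ B)
    (θ : Fin B → Ω → Fin d → ℝ) (θ₀ : Fin d → ℝ)
    (hmeas : ∀ k, Measurable (θ k))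
    (hindep : iIndepFun θ P)
    (hident : ∀ k, Measure.map (θ k) P = Measure.map (θ ⟨0, hB⟩) P)
    (hMCH : P {ω | ∃ j, θ ⟨0, hB⟩ ω j - θ₀ j = 0} = 0)
    (hzero : ∀ s : Fin d → Bool,
      (P {ω | (fun j => θ ⟨0, hB⟩ ω j - θ₀ j) ∈ orthant s}).toReal = 1 / 2 ^ d)
    (α : ℝ) (hα : α ∈ Set.Ioo (0 : ℝ) 1) :
    (P {ω | ∃ j, (∀ k, θ₀ j < θ k ω j) ∨ (∀ k, θ k ω j < θ₀ j)}).toReal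
        = 1 - (1 - (2 : ℝ) ^ (1 - (B : ℤ))) ^ d
      ∧ ((P {ω | ∃ j, (∀ k, θ₀ j < θ k ω j) ∨ (∀ k, θ k ω j < θ₀ j)}).toReal ≤ α
          ↔ 1 - Real.logb 2 (1 - (1 - α) ^ ((d : ℝ)⁻¹)) ≤ (B : ℝ)) := by
  have hmiss : P.real {ω | ∃ j, (∀ k, θ₀ j < θ k ω j) ∨ (∀ k, θ k ω j < θ₀ j)}
      = 1 - (1 - (2 : ℝ) ^ (1 - (B : ℤ))) ^ d := by
    have hident' : ∀ k, IdentDistrib (θ k) (θ ⟨0, hB⟩) P P := fun k =>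
      ⟨(hmeas k).aemeasurable, (hmeas _).aemeasurable, hident k⟩
    simpa [sub_pos, sub_neg] using measureReal_exists_forall_pos_or_forall_neg
      (X := fun k ω => θ k ω - θ₀) (fun k => (hmeas k).sub_const θ₀)
      (hindep.comp _ fun _ => measurable_sub_const θ₀)
      (fun k => (hident' k).comp (measurable_sub_const θ₀)) hMCH hzero
  rw [← measureReal_def, hmiss]
  exact ⟨rfl, one_sub_one_sub_two_zpow_pow_le_iff (by omega) hB hα⟩
end
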